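/- arXiv:0811.2090 — 4 statements merged into one kernel-verified Lean document; each statement's English description precedes it below -/
import Mathlib

section
/- The split interval, i.e. the set [0,1] × {0,1} equipped with the lexicographic order ((s,i) < (t,j) iff s < t, or s = t and i < j) and its order topology, is a compact linearly ordered space that is not fragmentable. -/
open Set

/-- `d` is a metric on `K` (as a function, not necessarily related to the topology). -/
def IsMetricOn {K : Type} (d : K → K → ℝ) : Prop :=
  (∀ x y : K, 0 ≤ d x y) ∧ (∀ x : K, d x x = 0) ∧
  (∀ x y : K, d x y = 0 → x = y) ∧ (∀ x y : K, d x y = d y x) ∧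
  (∀ x y z : K, d x z ≤ d x y + d y z)

/-- `d` fragments `K`: every nonempty subset has relatively open nonempty pieces of
arbitrarily small `d`-diameter. -/
def Fragments {K : Type} [TopologicalSpace K] (d : K → K → ℝ) : Prop :=
  ∀ M : Set K, M.Nonempty → ∀ ε : ℝ, 0 < ε →
    ∃ U : Set K, IsOpen U ∧ (M ∩ U).Nonempty ∧
      ∀ x ∈ M ∩ U, ∀ y ∈ M ∩ U, d x y < ε

/-- A topological space is fragmentable if some metric fragments it. -/
def Fragmentable (K : Type) [TopologicalSpace K] : Prop :=
  ∃ d : K → K → ℝ, IsMetricOn d ∧ Fragments d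

/-- A compact space is Radon–Nikodým compact if some lower semicontinuous metric
fragments it. -/
def RNCompact (K : Type) [TopologicalSpace K] : Prop :=
  ∃ d : K → K → ℝ, IsMetricOn d ∧
    LowerSemicontinuous (fun p : K × K => d p.1 p.2) ∧ Fragments d

/-- A set is scattered if every nonempty subset of it has a relatively isolated point. -/
def IsScatteredSet {K : Type} [TopologicalSpace K] (s : Set K) : Prop :=
  ∀ t : Set K, t ⊆ s → t.Nonempty → ∃ x ∈ t, ∃ U : Set K, IsOpen U ∧ t ∩ U = {x}

/-- The split interval `[0,1] × {0,1}` with the lexicographic order. -/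
abbrev SplitInterval : Type := ↥(Set.Icc (0 : ℝ) 1) ×ₗ Bool

/-- The split interval carries its order topology. -/
instance : TopologicalSpace SplitInterval := Preorder.topology SplitInterval

instance : OrderTopology SplitInterval := ⟨rfl⟩

/-!
The split interval is compact because a lexicographic product of complete linear orders is a
complete linear order. If a metric `d` fragmented it, the gap `d (t, 0) (t, 1)` would be at least
some `ε > 0` for uncountably many `t`. Among these, the points that are condensation points from
both sides form a nonempty set `A` accumulating on each of its points from both sides, and then
every open set meeting `A × {0, 1}` contains both `(w, 0)` and `(w, 1)` for some `w ∈ A`; so no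
piece of `A × {0, 1}` has `d`-diameter below `ε`.
-/

open Filter Topology

namespace Prod.Lex

variable {α β : Type*} [CompleteLinearOrder α] [CompleteLinearOrder β]

/-- When the supremum `a` of the first coordinates is not attained, the fibre over `a` is empty and
the second coordinate is `⊥`. -/
noncomputable instance : SupSet (α ×ₗ β) where
  sSup S :=
    let a := sSup ((fun x ↦ (ofLex x).1) '' S)
    toLex (a, sSup {b | toLex (a, b) ∈ S})

theorem isLUB_sSup (S : Set (α ×ₗ β)) : IsLUB S (sSup S) := by
  set a := sSup ((fun x : α ×ₗ β ↦ (ofLex x).1) '' S)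
  refine ⟨fun x hx ↦ ?_, fun u hu ↦ ?_⟩
  · obtain h | h := (le_sSup (mem_image_of_mem _ hx) : (ofLex x).1 ≤ a).lt_or_eq
    · exact le_iff.2 (Or.inl h)
    · refine le_iff.2 (Or.inr ⟨h, le_sSup ?_⟩)
      have hx' : toLex ((ofLex x).1, (ofLex x).2) ∈ S := hx
      rwa [h] at hx'
  · have hau : a ≤ (ofLex u).1 :=
      sSup_le <| forall_mem_image.2 fun x hx ↦ monotone_fst _ _ (hu hx)
    obtain h | h := hau.lt_or_eq
    · exact le_iff.2 (Or.inl h)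
    · refine le_iff.2 (Or.inr ⟨h, sSup_le fun b hb ↦ ?_⟩)
      obtain h' | ⟨-, h'⟩ := le_iff.1 (hu hb)
      · exact absurd h (ne_of_lt h')
      · exact h'

noncomputable instance : CompleteLinearOrder (α ×ₗ β) :=
  { LinearOrder.toBiheytingAlgebra _, (inferInstance : LinearOrder (α ×ₗ β)),
    completeLatticeOfSup _ isLUB_sSup with }

end Prod.Lex

section Condensation

variable {X : Type*} [TopologicalSpace X] [SecondCountableTopology X]

theorem countable_setOf_exists_mem_nhds_countable_inter (s : Set X) :
    {x ∈ s | ∃ U ∈ 𝓝 x, (U ∩ s).Countable}.Countable := by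
  set N := {x ∈ s | ∃ U ∈ 𝓝 x, (U ∩ s).Countable}
  choose! U hU hUs using fun x (hx : x ∈ N) ↦ hx.2
  obtain ⟨t, htN, htc, hNt⟩ :=
    TopologicalSpace.countable_cover_nhdsWithin fun x hx ↦ mem_nhdsWithin_of_mem_nhds (hU x hx)
  refine (htc.biUnion fun x hx ↦ hUs x (htN hx)).mono fun y hy ↦ ?_
  obtain ⟨x, hxt, hyx⟩ := mem_iUnion₂.1 (hNt hy)
  exact mem_iUnion₂.2 ⟨x, hxt, hyx, hy.1⟩

variable [LinearOrder X] [OrderTopology X]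

theorem countable_setOf_exists_mem_nhdsGT_countable_inter (s : Set X) :
    {x ∈ s | ∃ U ∈ 𝓝[>] x, (U ∩ s).Countable}.Countable := by
  set N := {x ∈ s | ∃ U ∈ 𝓝 x, (U ∩ s).Countable}
  refine ((countable_setOf_exists_mem_nhds_countable_inter s).union
    (countable_setOfPred_isolated_right_within (s := s \ N))).mono ?_
  rintro x ⟨hxs, U, hU, hUs⟩
  by_cases hxN : x ∈ N
  · exact Or.inl hxN
  right
  refine ⟨⟨hxs, hxN⟩, ?_⟩
  obtain ⟨V, hVo, hxV, hVU⟩ := mem_nhdsWithin.1 hU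
  -- every point of `s` in `V ∩ (x, ∞)` has a neighbourhood meeting `s` countably, so lies in `N`
  have hdisj : V ∩ (s \ N ∩ Ioi x) = ∅ :=
    eq_empty_of_forall_notMem fun y ⟨hyV, ⟨hys, hyN⟩, hxy⟩ ↦ hyN ⟨hys, V ∩ Ioi x,
      (hVo.inter isOpen_Ioi).mem_nhds ⟨hyV, hxy⟩, hUs.mono (inter_subset_inter_left _ hVU)⟩
  rw [← empty_mem_iff_bot, ← hdisj]
  exact inter_mem (mem_nhdsWithin_of_mem_nhds (hVo.mem_nhds hxV)) self_mem_nhdsWithin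

theorem countable_setOf_exists_mem_nhdsLT_countable_inter (s : Set X) :
    {x ∈ s | ∃ U ∈ 𝓝[<] x, (U ∩ s).Countable}.Countable :=
  countable_setOf_exists_mem_nhdsGT_countable_inter (X := Xᵒᵈ) s

/-- Removing the countably many points that are not condensation points of `s` on both sides
leaves a set accumulating on each of its points from both sides. -/
theorem exists_nonempty_subset_frequently_nhdsLT_nhdsGT {s : Set X} (hs : ¬ s.Countable) :
    ∃ A ⊆ s, A.Nonempty ∧ ∀ x ∈ A, (∃ᶠ y in 𝓝[<] x, y ∈ A) ∧ ∃ᶠ y in 𝓝[>] x, y ∈ A := by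
  set C := {x ∈ s | ∃ U ∈ 𝓝[<] x, (U ∩ s).Countable} ∪
    {x ∈ s | ∃ U ∈ 𝓝[>] x, (U ∩ s).Countable}
  have hC : C.Countable := (countable_setOf_exists_mem_nhdsLT_countable_inter s).union
    (countable_setOf_exists_mem_nhdsGT_countable_inter s)
  have hmeet : ∀ U, ¬ (U ∩ s).Countable → ∃ y ∈ U, y ∈ s \ C := fun U hU ↦ by
    by_contra! h
    exact hU (hC.mono fun y hy ↦ by_contra fun hyC ↦ h y hy.1 ⟨hy.2, hyC⟩)
  refine ⟨s \ C, sdiff_subset, ?_, fun x ⟨hxs, hxC⟩ ↦ ⟨?_, ?_⟩⟩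
  · obtain ⟨y, -, hy⟩ := hmeet univ (by rwa [univ_inter])
    exact ⟨y, hy⟩
  · exact frequently_iff.2 fun hU ↦ hmeet _ fun h ↦ hxC (Or.inl ⟨hxs, _, hU, h⟩)
  · exact frequently_iff.2 fun hU ↦ hmeet _ fun h ↦ hxC (Or.inr ⟨hxs, _, hU, h⟩)

end Condensation

theorem exists_pos_not_countable_setOf_le {ι : Type*} [Uncountable ι] {f : ι → ℝ}
    (hf : ∀ i, 0 < f i) : ∃ ε > 0, ¬ {i | ε ≤ f i}.Countable := by
  by_contra! h
  refine not_countable_univ <| (countable_iUnion fun n : ℕ ↦ h (1 / (n + 1)) (by positivity)).mono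
    fun i _ ↦ ?_
  obtain ⟨n, hn⟩ := exists_nat_one_div_lt (hf i)
  exact mem_iUnion.2 ⟨n, hn.le⟩

namespace Prod.Lex

theorem toLex_mem_Ioo {α β : Type*} [Preorder α] [Preorder β] {l r : α ×ₗ β} {w : α}
    (hl : (ofLex l).1 < w) (hr : w < (ofLex r).1) (b : β) : toLex (w, b) ∈ Ioo l r :=
  ⟨lt_iff.2 (Or.inl hl), lt_iff.2 (Or.inl hr)⟩

variable {α : Type*} [LinearOrder α] [TopologicalSpace α] [OrderTopology α]
  [TopologicalSpace (α ×ₗ Bool)] [OrderTopology (α ×ₗ Bool)]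

theorem exists_toLex_false_mem_toLex_true_mem {A : Set α} {t : α} {b : Bool} {U : Set (α ×ₗ Bool)}
    (hU : U ∈ 𝓝 (toLex (t, b))) (hlt : ∃ᶠ y in 𝓝[<] t, y ∈ A) (hgt : ∃ᶠ y in 𝓝[>] t, y ∈ A) :
    ∃ w ∈ A, toLex (w, false) ∈ U ∧ toLex (w, true) ∈ U := by
  cases b with
  | false =>
    obtain ⟨y, -, hyt⟩ := (hlt.and_eventually self_mem_nhdsWithin).exists
    obtain ⟨l, hl, hlU⟩ := exists_Ioc_subset_of_mem_nhds hU
      ⟨toLex (y, true), toLex_lt_toLex.2 (Or.inl hyt)⟩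
    have hlt' : (ofLex l).1 < t := (lt_iff.1 hl).resolve_right fun h ↦ absurd h.2 (by simp)
    obtain ⟨w, hwA, hw⟩ := (hlt.and_eventually (Ioo_mem_nhdsLT hlt')).exists
    have hwU (b : Bool) : toLex (w, b) ∈ U :=
      hlU <| Ioo_subset_Ioc_self <| toLex_mem_Ioo (r := toLex (t, false)) hw.1 hw.2 b
    exact ⟨w, hwA, hwU false, hwU true⟩
  | true =>
    obtain ⟨y, -, hty⟩ := (hgt.and_eventually self_mem_nhdsWithin).exists
    obtain ⟨r, hr, hrU⟩ := exists_Ico_subset_of_mem_nhds hU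
      ⟨toLex (y, false), toLex_lt_toLex.2 (Or.inl hty)⟩
    have hgt' : t < (ofLex r).1 := (lt_iff.1 hr).resolve_right fun h ↦ absurd h.2 (by simp)
    obtain ⟨w, hwA, hw⟩ := (hgt.and_eventually (Ioo_mem_nhdsGT hgt')).exists
    have hwU (b : Bool) : toLex (w, b) ∈ U :=
      hrU <| Ioo_subset_Ico_self <| toLex_mem_Ioo (l := toLex (t, true)) hw.1 hw.2 b
    exact ⟨w, hwA, hwU false, hwU true⟩

end Prod.Lex

/-- The split interval, with the lexicographic order and its order topology, is a compact
linearly ordered space that is not fragmentable. -/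
theorem stmt_6 : CompactSpace SplitInterval ∧ ¬ Fragmentable SplitInterval := by
  have : Fact ((0 : ℝ) ≤ 1) := ⟨zero_le_one⟩
  have : Uncountable (Icc (0 : ℝ) 1) := by
    rw [← Cardinal.aleph0_lt_mk_iff, Cardinal.mk_Icc_real zero_lt_one]
    exact Cardinal.aleph0_lt_continuum
  refine ⟨inferInstance, ?_⟩
  rintro ⟨d, ⟨hd_nonneg, -, hd_eq, -, -⟩, hfrag⟩
  obtain ⟨ε, hε, hB⟩ := exists_pos_not_countable_setOf_le
    (f := fun t ↦ d (toLex (t, false)) (toLex (t, true))) fun t ↦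
      (hd_nonneg _ _).lt_of_ne' fun h ↦ by simpa using hd_eq _ _ h
  obtain ⟨A, hAB, ⟨t, htA⟩, hA⟩ := exists_nonempty_subset_frequently_nhdsLT_nhdsGT hB
  obtain ⟨U, hU, ⟨x, hxA, hxU⟩, hdiam⟩ :=
    hfrag {x | (ofLex x).1 ∈ A} ⟨toLex (t, false), htA⟩ ε hε
  obtain ⟨w, hwA, hw₀, hw₁⟩ :=
    Prod.Lex.exists_toLex_false_mem_toLex_true_mem (hU.mem_nhds hxU) (hA _ hxA).1 (hA _ hxA).2
  exact (hdiam _ ⟨hwA, hw₀⟩ _ ⟨hwA, hw₁⟩).not_ge (hAB hwA)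
end

section
/- Let T be a tree, α a limit ordinal of cofinality κ, and H ⊆ T_α. Let (α_ξ)_{ξ<κ} and (α'_ξ)_{ξ<κ} be two cofinal sequences in α. If there exists an injective, regressive map π : H → ⋃_{ξ<κ} T_{α_ξ}, then there exists an injective, regressive map π' : H → ⋃_{ξ<κ} T_{α'_ξ}. -/
open Set

/-- A partial order is a tree order if the set of strict predecessors of
each element is well-ordered. -/
def IsTreeOrder (T : Type) [PartialOrder T] : Prop :=
  ∀ x : T, IsWellOrder {y : T // y < x} (fun a b => (a : T) < (b : T))

/-- The height of an element of a tree: the order type of its set of strict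
predecessors. -/
noncomputable def treeHt {T : Type} [PartialOrder T] (hT : IsTreeOrder T) (x : T) : Ordinal :=
  @Ordinal.type {y : T // y < x} (fun a b => (a : T) < (b : T)) (hT x)

/-- The level of a tree of order `α`. -/
def treeLevel {T : Type} [PartialOrder T] (hT : IsTreeOrder T) (α : Ordinal) : Set T :=
  {x : T | treeHt hT x = α}

/-- `f` is a cofinal sequence in the limit ordinal `α`: it is a strictly increasing
`cf α`-indexed sequence of ordinals below `α` whose supremum is `α`. -/
def IsCofinalSeq (α : Ordinal) (f : Ordinal → Ordinal) : Prop :=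
  (∀ ξ η : Ordinal, ξ < η → η < α.cof.ord → f ξ < f η) ∧
  (∀ ξ : Ordinal, ξ < α.cof.ord → f ξ < α) ∧
  (∀ β : Ordinal, β < α → ∃ ξ : Ordinal, ξ < α.cof.ord ∧ β ≤ f ξ)

/-- A subset `H` of the level `T_α` (`α` a limit ordinal) is simple if for some
cofinal sequence `(α_ξ)_{ξ < cf α}` in `α` there is an injective regressive map
from `H` into `⋃_{ξ < cf α} T_{α_ξ}`. -/
def TreeSimple {T : Type} [PartialOrder T] (hT : IsTreeOrder T) (α : Ordinal)
    (H : Set T) : Prop :=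
  ∃ f : Ordinal → Ordinal, IsCofinalSeq α f ∧
    ∃ π : T → T, Set.InjOn π H ∧
      ∀ x ∈ H, π x < x ∧ ∃ ξ : Ordinal, ξ < α.cof.ord ∧ treeHt hT (π x) = f ξ

/-- A tree is Hausdorff if every nonempty totally ordered subset has at most one
minimal upper bound. -/
def IsHausdorffTree (T : Type) [PartialOrder T] : Prop :=
  ∀ A : Set T, A.Nonempty → IsChain (· ≤ ·) A → ∀ u v : T,
    u ∈ upperBounds A → (∀ w ∈ upperBounds A, ¬ w < u) →
    v ∈ upperBounds A → (∀ w ∈ upperBounds A, ¬ w < v) → u = v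

/-- The interval topology on a tree, generated by the sets `(x, z]` and `(0, z]`. -/
def intervalTopology (T : Type) [PartialOrder T] : TopologicalSpace T :=
  TopologicalSpace.generateFrom
    ({s : Set T | ∃ x z : T, s = Set.Ioc x z} ∪ {s : Set T | ∃ z : T, s = Set.Iic z})

/-!
Choose a strictly increasing `g : cf α → cf α` with `α_ξ ≤ α'_{g ξ}`: the least `ζ` with
`α_ξ ≤ α'_ζ` is monotone in `ξ`, and adding `ξ` to it makes it strictly increasing while
staying below the additively principal `cf α`. If `π x` has height `α_ξ`, let `π' x` be the
predecessor of `x` of height `α'_{g ξ}`. When `π' x = π' y`, injectivity of `g` gives `π x`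
and `π y` the same height; both lie below `π' x`, in a chain, so they coincide, and `x = y`.
-/

section Tree

variable {T : Type} [PartialOrder T] (hT : IsTreeOrder T)

lemma treeHt_eq_typein {x y : T} (h : y < x) :
    treeHt hT y =
      @Ordinal.typein {z : T // z < x} (fun a b => (a : T) < (b : T)) (hT x) ⟨y, h⟩ := by
  have := hT x
  rw [← @Ordinal.type_subrel {z : T // z < x} (fun a b => (a : T) < (b : T)) (hT x) ⟨y, h⟩]
  refine (@Ordinal.type_eq _ _ _ _ (hT y) _).2 ⟨?_⟩
  exact ⟨⟨fun z => ⟨⟨z.1, z.2.trans h⟩, z.2⟩, fun b => ⟨b.1.1, b.2⟩, fun _ => rfl, fun _ => rfl⟩,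
    Iff.rfl⟩

lemma treeHt_strictMono : StrictMono (treeHt hT) := by
  intro y x h
  have := hT x
  rw [treeHt_eq_typein hT h]
  exact Ordinal.typein_lt_type _ _

lemma exists_lt_treeHt_eq {x : T} {β : Ordinal} (h : β < treeHt hT x) :
    ∃ y < x, treeHt hT y = β := by
  have := hT x
  obtain ⟨⟨y, hy⟩, rfl⟩ := Ordinal.typein_surj _ h
  exact ⟨y, hy, treeHt_eq_typein hT hy⟩

lemma le_of_treeHt_le {x u v : T} (hu : u ≤ x) (hv : v ≤ x)
    (h : treeHt hT u ≤ treeHt hT v) : u ≤ v := by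
  have := hT x
  rcases hv.lt_or_eq with hv | rfl
  · rcases hu.lt_or_eq with hu | rfl
    · rcases trichotomous_of (fun a b : {z : T // z < x} => (a : T) < (b : T)) ⟨u, hu⟩ ⟨v, hv⟩
        with huv | huv | hvu
      · exact huv.le
      · exact (congrArg Subtype.val huv).le
      · exact absurd h (treeHt_strictMono hT hvu).not_ge
    · exact absurd h (treeHt_strictMono hT hv).not_ge
  · exact hu

lemma eq_of_treeHt_eq {x u v : T} (hu : u ≤ x) (hv : v ≤ x)
    (h : treeHt hT u = treeHt hT v) : u = v :=
  (le_of_treeHt_le hT hu hv h.le).antisymm (le_of_treeHt_le hT hv hu h.ge)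

lemma exists_injOn_regressive_treeHt_eq {H : Set T} {π : T → T} (hπreg : ∀ x ∈ H, π x < x)
    (hπinj : InjOn π H) (h : T → Ordinal) (hlt : ∀ x ∈ H, h x < treeHt hT x)
    (hle : ∀ x ∈ H, treeHt hT (π x) ≤ h x)
    (hdet : ∀ x ∈ H, ∀ y ∈ H, h x = h y → treeHt hT (π x) = treeHt hT (π y)) :
    ∃ σ : T → T, (∀ x ∈ H, σ x < x) ∧ (∀ x ∈ H, treeHt hT (σ x) = h x) ∧ InjOn σ H := by
  choose! σ hσreg hσht using fun x (hx : x ∈ H) => exists_lt_treeHt_eq hT (hlt x hx)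
  have hπσ : ∀ x ∈ H, π x ≤ σ x := fun x hx =>
    le_of_treeHt_le hT (hπreg x hx).le (hσreg x hx).le (by rw [hσht x hx]; exact hle x hx)
  refine ⟨σ, hσreg, hσht, fun x hx y hy hxy => hπinj hx hy ?_⟩
  have hht : h x = h y := by rw [← hσht x hx, ← hσht y hy, hxy]
  exact eq_of_treeHt_eq hT (hπσ x hx) (hxy ▸ hπσ y hy) (hdet x hx y hy hht)

end Tree

section CofinalSeq

variable {α : Ordinal} {f f' : Ordinal → Ordinal}

lemma IsCofinalSeq.strictMonoOn (hf : IsCofinalSeq α f) : StrictMonoOn f (Iio α.cof.ord) :=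
  fun _ _ _ hη hξη => hf.1 _ _ hξη hη

lemma IsCofinalSeq.exists_strictMonoOn_le_comp (hα : Order.IsSuccLimit α)
    (hf : IsCofinalSeq α f) (hf' : IsCofinalSeq α f') :
    ∃ g : Ordinal → Ordinal, MapsTo g (Iio α.cof.ord) (Iio α.cof.ord) ∧
      StrictMonoOn g (Iio α.cof.ord) ∧ ∀ ξ < α.cof.ord, f ξ ≤ f' (g ξ) := by
  set κ := α.cof.ord
  set S : Ordinal → Set Ordinal := fun ξ => {ζ | ζ < κ ∧ f ξ ≤ f' ζ}
  have hS : ∀ ξ < κ, (S ξ).Nonempty := fun ξ hξ => hf'.2.2 (f ξ) (hf.2.1 ξ hξ)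
  have hSmem : ∀ ξ < κ, sInf (S ξ) ∈ S ξ := fun ξ hξ => csInf_mem (hS ξ hξ)
  have hSmono : ∀ ξ η, ξ < η → η < κ → sInf (S ξ) ≤ sInf (S η) := fun ξ η hξη hη =>
    csInf_le_csInf (OrderBot.bddBelow _) (hS η hη)
      fun ζ hζ => ⟨hζ.1, (hf.1 ξ η hξη hη).le.trans hζ.2⟩
  have hκ : Ordinal.IsPrincipal (· + ·) κ := Ordinal.isPrincipal_add_ord <|
    Ordinal.aleph0_le_cof_iff.2 (Ordinal.one_lt_cof_iff.2 hα)
  have hmaps : MapsTo (fun ξ => sInf (S ξ) + ξ) (Iio κ) (Iio κ) :=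
    fun ξ hξ => hκ (hSmem ξ hξ).1 hξ
  refine ⟨fun ξ => sInf (S ξ) + ξ, hmaps, fun ξ _ η hη hξη => ?_, fun ξ hξ => ?_⟩
  · calc sInf (S ξ) + ξ < sInf (S ξ) + η := add_lt_add_right hξη _
      _ ≤ sInf (S η) + η := add_le_add_left (hSmono ξ η hξη hη) _
  · exact (hSmem ξ hξ).2.trans <|
      hf'.strictMonoOn.monotoneOn (hSmem ξ hξ).1 (hmaps hξ) le_self_add

end CofinalSeq

/-- If `H ⊆ T_α` admits an injective regressive map into the union of the levels of one
cofinal sequence in `α`, then it admits one for any other cofinal sequence. -/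
theorem stmt_7 {T : Type} [PartialOrder T] (hT : IsTreeOrder T)
    (α : Ordinal) (hα : Order.IsSuccLimit α) (H : Set T) (hH : H ⊆ treeLevel hT α)
    (f f' : Ordinal → Ordinal) (hf : IsCofinalSeq α f) (hf' : IsCofinalSeq α f')
    (π : T → T) (hπreg : ∀ x ∈ H, π x < x)
    (hπmem : ∀ x ∈ H, ∃ ξ : Ordinal, ξ < α.cof.ord ∧ treeHt hT (π x) = f ξ)
    (hπinj : Set.InjOn π H) :
    ∃ π' : T → T, (∀ x ∈ H, π' x < x) ∧
      (∀ x ∈ H, ∃ ξ : Ordinal, ξ < α.cof.ord ∧ treeHt hT (π' x) = f' ξ) ∧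
      Set.InjOn π' H := by
  choose! ξ hξκ hξf using hπmem
  obtain ⟨g, hgκ, hgmono, hfg⟩ := hf.exists_strictMonoOn_le_comp hα hf'
  have hinj : InjOn (f' ∘ g) (Iio α.cof.ord) := (hf'.strictMonoOn.comp hgmono hgκ).injOn
  obtain ⟨σ, hσreg, hσht, hσinj⟩ := exists_injOn_regressive_treeHt_eq hT hπreg hπinj
    (fun x => f' (g (ξ x)))
    (fun x hx => (hH hx).symm ▸ hf'.2.1 _ (hgκ (hξκ x hx)))
    (fun x hx => hξf x hx ▸ hfg _ (hξκ x hx))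
    (fun x hx y hy hxy => by rw [hξf x hx, hξf y hy, hinj (hξκ x hx) (hξκ y hy) hxy])
  exact ⟨σ, hσreg, fun x hx => ⟨g (ξ x), hgκ (hξκ x hx), hσht x hx⟩, hσinj⟩
end

section
/- Let T be an admissible partition tree of a compact linearly ord택ordered space K, and let s ⊆ T be totally ordered in the tree order. Then the set {min a : a ∈ s} is well-ordered in K and the set {max a : a ∈ s} is conversely well-ordered (well-ordered with respect to the reverse order of K). Moreover, if s is infinite of cardinality κ, then {min a : a ∈ s} or {max a : a ∈ s} has cardinality κ. -/
open Set

/-- `T`, together with the interpretation map `I` assigning to each element of `T` a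
subset of `K`, is an admissible partition tree of the compact linearly ordered space `K`. -/
structure IsAdmissiblePartitionTree (K : Type) [LinearOrder K] [TopologicalSpace K]
    (T : Type) [PartialOrder T] (I : T → Set K) : Prop where
  /-- The order on `T` is a tree order. -/
  tree : IsTreeOrder T
  /-- The tree order is reverse inclusion of the associated intervals. -/
  le_iff : ∀ a b : T, a ≤ b ↔ I b ⊆ I a
  /-- Every member is a closed subset of `K`. -/
  closed : ∀ a : T, IsClosed (I a)
  /-- Every member is an interval of `K`. -/
  interval : ∀ a : T, (I a).OrdConnected
  /-- Every member is non-trivial, i.e. has at least two points. -/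
  nontrivial : ∀ a : T, ∃ x y : K, x ∈ I a ∧ y ∈ I a ∧ x ≠ y
  /-- The zeroth level consists precisely of (the element representing) `K` itself. -/
  root : ∀ a : T, treeHt tree a = 0 ↔ I a = Set.univ
  /-- The zeroth level is nonempty. -/
  root_exists : ∃ a : T, I a = Set.univ
  /-- Two-element members have no immediate successors. -/
  two_elt : ∀ a : T, (∃ x y : K, x ≠ y ∧ I a = {x, y}) → ¬ ∃ b : T, a ⋖ b
  /-- A member with at least three elements has exactly two immediate successors,
  splitting it at an interior point. -/
  three_elt : ∀ a : T,
    (∃ x y z : K, x ≠ y ∧ y ≠ z ∧ x ≠ z ∧ x ∈ I a ∧ y ∈ I a ∧ z ∈ I a) →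
    ∃ b c : T, a ⋖ b ∧ a ⋖ c ∧ b ≠ c ∧ (∀ d : T, a ⋖ d → d = b ∨ d = c) ∧
      ∃ x y z : K, x < y ∧ y < z ∧
        IsLeast (I a) x ∧ IsLeast (I b) x ∧ IsGreatest (I b) y ∧
        IsLeast (I c) y ∧ IsGreatest (I c) z ∧ IsGreatest (I a) z
  /-- For limit `α`, the members of level `α` are exactly the intersections of members
  chosen from each earlier level. -/
  limit_level : ∀ α : Ordinal, Order.IsSuccLimit α → ∀ a : T,
    (treeHt tree a = α ↔ ∃ g : Ordinal → T, (∀ ξ : Ordinal, ξ < α → treeHt tree (g ξ) = ξ) ∧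
      I a = ⋂ ξ ∈ Set.Iio α, I (g ξ))

/-!
Along a chain `a₀ < a₁ < ⋯` of the tree the intervals shrink, so their left endpoints increase
and their right endpoints decrease. A strictly decreasing sequence of left endpoints (or strictly
increasing sequence of right endpoints) of members of the chain would therefore come from a
strictly decreasing sequence in the tree, which cannot exist since a tree order is well-founded.
Since `I a = [min a, max a]`, a member of the tree is determined by its two endpoints, so
`|s| ≤ |{min a}| · |{max a}|`, and for infinite `|s|` one factor must already be `|s|`.
-/

theorem IsTreeOrder.wellFoundedLT {T : Type} [PartialOrder T] (hT : IsTreeOrder T) :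
    WellFoundedLT T := by
  have acc_of_lt (x : T) (y : {y : T // y < x}) : Acc (· < ·) (y : T) :=
    (hT x).wf.induction (C := fun y => Acc (· < ·) (y : T)) y fun y ih =>
      ⟨_, fun z hz => ih ⟨z, hz.trans y.2⟩ hz⟩
  exact ⟨⟨fun x => ⟨x, fun y hy => acc_of_lt x ⟨y, hy⟩⟩⟩⟩

section Chain

variable {α β : Type*} [PartialOrder α] [Preorder β] {s : Set α} {f : α → β}

theorem IsChain.lt_of_monotoneOn_lt (hs : IsChain (· ≤ ·) s) (hf : MonotoneOn f s)
    {a b : α} (ha : a ∈ s) (hb : b ∈ s) (h : f a < f b) : a < b := by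
  rcases hs.total hb ha with hba | hab
  · exact absurd (hf hb ha hba) h.not_ge
  · exact hab.lt_of_ne (by rintro rfl; exact h.false)

theorem IsChain.isWF_image_of_monotoneOn [WellFoundedLT α] (hs : IsChain (· ≤ ·) s)
    (hf : MonotoneOn f s) : (f '' s).IsWF := by
  choose g hgs hfg using fun y : f '' s => y.2
  refine Subrelation.wf (fun {y y'} (h : y < y') => ?_) (InvImage.wf g wellFounded_lt)
  refine hs.lt_of_monotoneOn_lt hf (hgs y) (hgs y') ?_
  rwa [hfg, hfg]

theorem IsChain.wellFoundedOn_image_gt_of_antitoneOn [WellFoundedLT α]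
    (hs : IsChain (· ≤ ·) s) (hf : AntitoneOn f s) : (f '' s).WellFoundedOn (· > ·) :=
  hs.isWF_image_of_monotoneOn (β := βᵒᵈ) hf.dual_right

end Chain

universe u in
theorem Cardinal.mk_le_mk_image_mul_mk_image {α β γ : Type u} {s : Set α} {f : α → β}
    {g : α → γ} (h : InjOn (fun a => (f a, g a)) s) :
    Cardinal.mk s ≤ Cardinal.mk (f '' s) * Cardinal.mk (g '' s) := by
  have := Cardinal.mk_le_of_injective (f := fun a : s =>
    ((⟨f a, a, a.2, rfl⟩ : f '' s), (⟨g a, a, a.2, rfl⟩ : g '' s)))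
    fun a b hab => Subtype.ext <| h a.2 b.2 <| Prod.ext
      (congrArg (fun p : f '' s × g '' s => (p.1 : β)) hab)
      (congrArg (fun p : f '' s × g '' s => (p.2 : γ)) hab)
  rwa [Cardinal.mk_prod, Cardinal.lift_id, Cardinal.lift_id] at this

theorem Cardinal.eq_or_eq_of_le_mul {a b c : Cardinal} (hc : Cardinal.aleph0 ≤ c)
    (h : c ≤ a * b) (ha : a ≤ c) (hb : b ≤ c) : a = c ∨ b = c := by
  by_contra! hne
  exact (Cardinal.mul_lt_of_lt hc (ha.lt_of_ne hne.1) (hb.lt_of_ne hne.2)).not_ge h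

namespace IsAdmissiblePartitionTree

variable {K T : Type} [LinearOrder K] [TopologicalSpace K] [OrderTopology K] [CompactSpace K]
  [PartialOrder T] {I : T → Set K} (hT : IsAdmissiblePartitionTree K T I)

include hT in
theorem exists_isLeast (a : T) : ∃ x, IsLeast (I a) x :=
  (hT.closed a).isCompact.exists_isLeast <|
    let ⟨x, _, hx, _⟩ := hT.nontrivial a; ⟨x, hx⟩

include hT in
theorem exists_isGreatest (a : T) : ∃ x, IsGreatest (I a) x :=
  (hT.closed a).isCompact.exists_isGreatest <|
    let ⟨x, _, hx, _⟩ := hT.nontrivial a; ⟨x, hx⟩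

noncomputable def leftEnd (a : T) : K := (hT.exists_isLeast a).choose

noncomputable def rightEnd (a : T) : K := (hT.exists_isGreatest a).choose

theorem isLeast_leftEnd (a : T) : IsLeast (I a) (hT.leftEnd a) :=
  (hT.exists_isLeast a).choose_spec

theorem isGreatest_rightEnd (a : T) : IsGreatest (I a) (hT.rightEnd a) :=
  (hT.exists_isGreatest a).choose_spec

theorem eq_Icc (a : T) : I a = Icc (hT.leftEnd a) (hT.rightEnd a) :=
  Subset.antisymm (fun _ hx => ⟨(hT.isLeast_leftEnd a).2 hx, (hT.isGreatest_rightEnd a).2 hx⟩)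
    ((hT.interval a).out (hT.isLeast_leftEnd a).1 (hT.isGreatest_rightEnd a).1)

theorem monotone_leftEnd : Monotone hT.leftEnd := fun a b hab =>
  (hT.isLeast_leftEnd a).2 ((hT.le_iff a b).1 hab (hT.isLeast_leftEnd b).1)

theorem antitone_rightEnd : Antitone hT.rightEnd := fun a b hab =>
  (hT.isGreatest_rightEnd a).2 ((hT.le_iff a b).1 hab (hT.isGreatest_rightEnd b).1)

theorem injective_leftEnd_rightEnd :
    Function.Injective fun a => (hT.leftEnd a, hT.rightEnd a) := by
  intro a b hab
  obtain ⟨hl, hr⟩ := Prod.mk.inj hab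
  have hI : I a = I b := by
    rw [hT.eq_Icc, hT.eq_Icc, hl, hr]
  exact le_antisymm ((hT.le_iff a b).2 hI.ge) ((hT.le_iff b a).2 hI.le)

theorem setOf_isLeast_eq_image (s : Set T) :
    {x : K | ∃ a ∈ s, IsLeast (I a) x} = hT.leftEnd '' s := by
  ext x
  exact exists_congr fun a => and_congr_right fun _ =>
    ⟨fun hx => (hT.isLeast_leftEnd a).unique hx, fun hx => hx ▸ hT.isLeast_leftEnd a⟩

theorem setOf_isGreatest_eq_image (s : Set T) :
    {x : K | ∃ a ∈ s, IsGreatest (I a) x} = hT.rightEnd '' s := by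
  ext x
  exact exists_congr fun a => and_congr_right fun _ =>
    ⟨fun hx => (hT.isGreatest_rightEnd a).unique hx, fun hx => hx ▸ hT.isGreatest_rightEnd a⟩

end IsAdmissiblePartitionTree

theorem stmt_15_general {K : Type} [LinearOrder K] [TopologicalSpace K] [OrderTopology K]
    [CompactSpace K]
    {T : Type} [PartialOrder T] {I : T → Set K}
    (hT : IsAdmissiblePartitionTree K T I)
    (s : Set T) (hs : IsChain (· ≤ ·) s)
    (MinS MaxS : Set K)
    (hMin : MinS = {x : K | ∃ a ∈ s, IsLeast (I a) x})
    (hMax : MaxS = {x : K | ∃ a ∈ s, IsGreatest (I a) x}) :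
    MinS.IsWF ∧ MaxS.WellFoundedOn (· > ·) ∧
      (s.Infinite → Cardinal.mk MinS = Cardinal.mk s ∨ Cardinal.mk MaxS = Cardinal.mk s) := by
  rw [hMin, hMax, hT.setOf_isLeast_eq_image, hT.setOf_isGreatest_eq_image]
  have := hT.tree.wellFoundedLT
  refine ⟨hs.isWF_image_of_monotoneOn (hT.monotone_leftEnd.monotoneOn s),
    hs.wellFoundedOn_image_gt_of_antitoneOn (hT.antitone_rightEnd.antitoneOn s),
    fun hinf => ?_⟩
  exact Cardinal.eq_or_eq_of_le_mul (Cardinal.aleph0_le_mk_iff.2 hinf.to_subtype)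
    (Cardinal.mk_le_mk_image_mul_mk_image hT.injective_leftEnd_rightEnd.injOn)
    Cardinal.mk_image_le Cardinal.mk_image_le

/-- For a chain `s` in an admissible partition tree, the set of left endpoints is
well-ordered and the set of right endpoints is conversely well-ordered; moreover, if `s`
is infinite then one of these two sets has the same cardinality as `s`. -/
theorem stmt_15 {K : Type} [LinearOrder K] [TopologicalSpace K] [OrderTopology K]
    [CompactSpace K] [Nontrivial K]
    {T : Type} [PartialOrder T] {I : T → Set K}
    (hT : IsAdmissiblePartitionTree K T I)
    (s : Set T) (hs : IsChain (· ≤ ·) s)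
    (MinS MaxS : Set K)
    (hMin : MinS = {x : K | ∃ a ∈ s, IsLeast (I a) x})
    (hMax : MaxS = {x : K | ∃ a ∈ s, IsGreatest (I a) x}) :
    MinS.IsWF ∧ MaxS.WellFoundedOn (· > ·) ∧
      (s.Infinite → Cardinal.mk MinS = Cardinal.mk s ∨ Cardinal.mk MaxS = Cardinal.mk s) :=
  stmt_15_general hT s hs MinS MaxS hMin hMax
end

section
/- Let T be an admissible partition tree of a compact linearly ordered space K, let α be a limit ordinal of cofinality κ with cofinal sequence (α_ξ)_{ξ<κ}, and let H ⊆ T_α. Then there exists a regressive map π : H → ⋃_{ξ<κ} T_{α_ξ} with the property that for every w ∈ ⋃_{ξ<κ} T_{α_ξ} with π^{-1}(w) nonempty, there exists b ∈ H such that min a ≤ min b for all a ∈ π^{-1}(w). -/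
open Set

/-
Two distinct members of the level `T_α` are incomparable, and incomparable members of an
admissible partition tree lie on opposite sides of each other: below the first level where
their branches differ the branches agree, and that level cannot be `0` (one root) or a limit
(an interval there is the intersection of its predecessors), so it is a successor level where
the branches pass through the two halves of one split interval.

Send `a ∈ H` to a predecessor `π a` at a cofinal level. If some `r ∈ H` lies to the right of
`a`, choose `π a` off the branch of `r`; then the whole interval `π a` lies left of `r`, so `r`
bounds the left endpoints of the fibre of `π a`. Otherwise `a` is the rightmost member of `H`
and bounds every left endpoint itself.
-/

namespace IsTreeOrder

variable {T : Type} [PartialOrder T] (hT : IsTreeOrder T)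

theorem treeHt_eq_typein {a z : T} (h : z < a) :
    treeHt hT z =
      @Ordinal.typein {y : T // y < a} (fun p q => (p : T) < (q : T)) (hT a) ⟨z, h⟩ := by
  have := hT a
  have := hT z
  rw [show (@Ordinal.typein {y : T // y < a} (fun p q => (p : T) < (q : T)) (hT a) ⟨z, h⟩ :
        Ordinal) = Ordinal.type (Subrel (fun p q : {y : T // y < a} => (p : T) < (q : T))
          (fun b : {y : T // y < a} => (b : T) < z)) from (Ordinal.type_subrel _ _).symm]
  exact Ordinal.type_eq.2 ⟨{
    toFun := fun w => ⟨⟨w.1, lt_trans w.2 h⟩, w.2⟩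
    invFun := fun b => ⟨b.1.1, b.2⟩
    left_inv := fun _ => rfl
    right_inv := fun _ => rfl
    map_rel_iff' := Iff.rfl }⟩

theorem treeHt_lt_treeHt {a z : T} (h : z < a) : treeHt hT z < treeHt hT a := by
  have := hT a
  rw [hT.treeHt_eq_typein h]
  exact Ordinal.typein_lt_type _ _

theorem treeHt_mono {a b : T} (h : a ≤ b) : treeHt hT a ≤ treeHt hT b := by
  rcases h.lt_or_eq with h | rfl
  exacts [(hT.treeHt_lt_treeHt h).le, le_rfl]

theorem not_le_of_treeHt_eq {a b : T} (hab : a ≠ b) (h : treeHt hT a = treeHt hT b) :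
    ¬ a ≤ b :=
  fun hle => (hT.treeHt_lt_treeHt (lt_of_le_of_ne hle hab)).ne h

theorem exists_lt_treeHt_eq {a : T} {ξ : Ordinal} (h : ξ < treeHt hT a) :
    ∃ z < a, treeHt hT z = ξ := by
  have := hT a
  set z := Ordinal.enum (fun p q : {y : T // y < a} => (p : T) < (q : T)) ⟨ξ, h⟩
  refine ⟨z.1, z.2, ?_⟩
  rw [hT.treeHt_eq_typein z.2]
  exact Ordinal.typein_enum _ h

theorem exists_le_treeHt_eq {a : T} {ξ : Ordinal} (h : ξ ≤ treeHt hT a) :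
    ∃ z ≤ a, treeHt hT z = ξ := by
  rcases h.lt_or_eq with h | rfl
  · obtain ⟨z, hz, e⟩ := hT.exists_lt_treeHt_eq h
    exact ⟨z, hz.le, e⟩
  · exact ⟨a, le_rfl, rfl⟩

theorem le_of_treeHt_le {x y y' : T} (hy : y ≤ x) (hy' : y' ≤ x)
    (h : treeHt hT y ≤ treeHt hT y') : y ≤ y' := by
  rcases hy'.lt_or_eq with hy'x | rfl
  · rcases hy.lt_or_eq with hyx | rfl
    · have := hT x
      rcases trichotomous_of (fun p q : {z : T // z < x} => (p : T) < (q : T))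
        ⟨y, hyx⟩ ⟨y', hy'x⟩ with hlt | heq | hgt
      · exact le_of_lt hlt
      · exact (congrArg Subtype.val heq).le
      · exact absurd h (not_le.2 (hT.treeHt_lt_treeHt hgt))
    · exact absurd h (not_le.2 (hT.treeHt_lt_treeHt hy'x))
  · exact hy

theorem lt_of_lt_of_branches_agree {u v u' v' w : T} (hu' : u' ≤ u) (hv' : v' ≤ v)
    (hht : treeHt hT u' = treeHt hT v')
    (hagree : ∀ u'' ≤ u, ∀ v'' ≤ v, treeHt hT u'' = treeHt hT v'' →
      treeHt hT u'' < treeHt hT u' → u'' = v'')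
    (hw : w < u') : w < v' := by
  obtain ⟨w', hw'v', e⟩ := hT.exists_lt_treeHt_eq (hht ▸ hT.treeHt_lt_treeHt hw)
  rwa [hagree w (hw.le.trans hu') w' (hw'v'.le.trans hv') e.symm (hT.treeHt_lt_treeHt hw)]

theorem exists_cofinal_pred_ge {α : Ordinal} {f : Ordinal → Ordinal} (hf : IsCofinalSeq α f)
    {a z : T} (ha : treeHt hT a = α) (hz : z < a) :
    ∃ p < a, (∃ ξ < α.cof.ord, treeHt hT p = f ξ) ∧ z ≤ p := by
  obtain ⟨ξ, hξ, hzξ⟩ := hf.2.2 _ (ha ▸ hT.treeHt_lt_treeHt hz)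
  obtain ⟨p, hpa, hp⟩ := hT.exists_lt_treeHt_eq (ha ▸ hf.2.1 ξ hξ)
  exact ⟨p, hpa, ⟨ξ, hξ, hp⟩, hT.le_of_treeHt_le hz.le hpa.le (hp ▸ hzξ)⟩

theorem exists_cofinal_pred {α : Ordinal} (hα : Order.IsSuccLimit α) {f : Ordinal → Ordinal}
    (hf : IsCofinalSeq α f) {a : T} (ha : treeHt hT a = α) :
    ∃ p < a, ∃ ξ < α.cof.ord, treeHt hT p = f ξ := by
  obtain ⟨z, hz, -⟩ := hT.exists_lt_treeHt_eq (ha ▸ hα.pos)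
  obtain ⟨p, hpa, hp, -⟩ := hT.exists_cofinal_pred_ge hf ha hz
  exact ⟨p, hpa, hp⟩

end IsTreeOrder

namespace IsAdmissiblePartitionTree

variable {K : Type} [LinearOrder K] [TopologicalSpace K] {T : Type} [PartialOrder T]
  {I : T → Set K} (hA : IsAdmissiblePartitionTree K T I)
include hA

theorem subset_of_le {a b : T} (h : a ≤ b) : I b ⊆ I a := (hA.le_iff a b).1 h

theorem le_of_forall_lt_le {a r : T} (ha : Order.IsSuccPrelimit (treeHt hA.tree a))
    (h : ∀ z < a, z ≤ r) : a ≤ r := by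
  refine (hA.le_iff a r).2 ?_
  by_cases hmin : IsMin (treeHt hA.tree a)
  · rw [(hA.root a).1 (isMin_iff_eq_bot.1 hmin)]
    exact subset_univ _
  obtain ⟨g, hg, hIg⟩ := (hA.limit_level _
    ((Order.isSuccPrelimit_iff_isSuccLimit_of_not_isMin hmin).1 ha) a).1 rfl
  rw [hIg]
  refine subset_iInter₂ fun ξ hξ => hA.subset_of_le (h _ ?_)
  have hle : g ξ ≤ a := (hA.le_iff _ _).2 (hIg ▸ biInter_subset_of_mem hξ)
  refine lt_of_le_of_ne hle fun he => ?_
  have hgξ := hg ξ hξ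
  rw [he] at hgξ
  exact (mem_Iio.1 hξ).ne hgξ.symm

theorem three_points_of_covBy {c u : T} (h : c ⋖ u) :
    ∃ x y z : K, x ≠ y ∧ y ≠ z ∧ x ≠ z ∧ x ∈ I c ∧ y ∈ I c ∧ z ∈ I c := by
  by_contra hno
  obtain ⟨x, y, hx, hy, hxy⟩ := hA.nontrivial c
  refine hA.two_elt c ⟨x, y, hxy, ?_⟩ ⟨u, h⟩
  ext w
  refine ⟨fun hw => ?_, by rintro (rfl | rfl) <;> assumption⟩
  by_contra hw'
  simp only [mem_insert_iff, mem_singleton_iff, not_or] at hw'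
  exact hno ⟨x, w, y, Ne.symm hw'.1, hw'.2, hxy, hx, hw, hy⟩

theorem separated_of_covBy {c u v : T} (hu : c ⋖ u) (hv : c ⋖ v) (huv : u ≠ v) :
    I u ⊆ lowerBounds (I v) ∨ I v ⊆ lowerBounds (I u) := by
  obtain ⟨b, d, -, -, -, hchildren, -, y, -, -, -, -, -, hyb, hyd, -, -⟩ :=
    hA.three_elt c (hA.three_points_of_covBy hu)
  have hbd : I b ⊆ lowerBounds (I d) := fun p hp q hq => (hyb.2 hp).trans (hyd.2 hq)
  rcases hchildren u hu with rfl | rfl <;> rcases hchildren v hv with rfl | rfl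
  exacts [absurd rfl huv, .inl hbd, .inr hbd, absurd rfl huv]

theorem separated_of_forall_lt_iff {u v : T} (huv : u ≠ v) (h : ∀ w, w < u ↔ w < v) :
    I u ⊆ lowerBounds (I v) ∨ I v ⊆ lowerBounds (I u) := by
  by_cases hlim : Order.IsSuccPrelimit (treeHt hA.tree u)
  · have hle := hA.le_of_forall_lt_le hlim fun z hz => ((h z).1 hz).le
    exact absurd ((h u).2 (lt_of_le_of_ne hle huv)) (lt_irrefl u)
  obtain ⟨δ, hδ⟩ := Order.not_isSuccPrelimit_iff.1 hlim
  obtain ⟨c, hcu, hc⟩ := hA.tree.exists_lt_treeHt_eq hδ.lt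
  have hcov : ∀ x, c < x → (∀ m, m < x → m < u) → c ⋖ x := fun x hcx hxu =>
    ⟨hcx, fun m hcm hmx => hδ.2 (hc ▸ hA.tree.treeHt_lt_treeHt hcm)
      (hA.tree.treeHt_lt_treeHt (hxu m hmx))⟩
  exact hA.separated_of_covBy (hcov u hcu fun _ => id)
    (hcov v ((h c).1 hcu) fun m => (h m).2) huv

theorem separated_of_not_le {u v : T} (huv : ¬ u ≤ v) (hvu : ¬ v ≤ u) :
    I u ⊆ lowerBounds (I v) ∨ I v ⊆ lowerBounds (I u) := by
  set ht := treeHt hA.tree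
  set S : Set Ordinal := {ξ | ∃ u' ≤ u, ∃ v' ≤ v, ht u' = ξ ∧ ht v' = ξ ∧ u' ≠ v'}
  have hS : S.Nonempty := by
    rcases le_total (ht u) (ht v) with h | h
    · obtain ⟨v', hv', e⟩ := hA.tree.exists_le_treeHt_eq h
      exact ⟨_, u, le_rfl, v', hv', rfl, e, fun he => huv (he ▸ hv')⟩
    · obtain ⟨u', hu', e⟩ := hA.tree.exists_le_treeHt_eq h
      exact ⟨_, u', hu', v, le_rfl, e, rfl, fun he => hvu (he ▸ hu')⟩
  obtain ⟨u', hu', v', hv', hu'S, hv'S, hne⟩ := csInf_mem hS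
  have hagree : ∀ u'' ≤ u, ∀ v'' ≤ v, ht u'' = ht v'' → ht u'' < ht u' → u'' = v'' := by
    intro u'' hu'' v'' hv'' e hlt
    by_contra hne''
    exact (hu'S ▸ hlt).not_ge (csInf_le' ⟨u'', hu'', v'', hv'', rfl, e.symm, hne''⟩)
  have hht : ht u' = ht v' := hu'S.trans hv'S.symm
  have hsame : ∀ w, w < u' ↔ w < v' := fun w =>
    ⟨hA.tree.lt_of_lt_of_branches_agree hu' hv' hht hagree,
      hA.tree.lt_of_lt_of_branches_agree hv' hu' hht.symm fun v'' hv'' u'' hu'' e hlt =>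
        (hagree u'' hu'' v'' hv'' e.symm (hht ▸ e.symm.trans_lt hlt)).symm⟩
  rcases hA.separated_of_forall_lt_iff hne hsame with h | h
  · exact .inl ((hA.subset_of_le hu').trans (h.trans (lowerBounds_mono_set (hA.subset_of_le hv'))))
  · exact .inr ((hA.subset_of_le hv').trans (h.trans (lowerBounds_mono_set (hA.subset_of_le hu'))))

theorem subset_lowerBounds_of_lt {w a r : T} (hwa : w < a) (hwr : ¬ w ≤ r) (hrw : ¬ r ≤ w)
    (har : I a ⊆ lowerBounds (I r)) : I w ⊆ lowerBounds (I r) := by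
  refine (hA.separated_of_not_le hwr hrw).resolve_right fun hrw' => ?_
  obtain ⟨x, y, hx, hy, hxy⟩ := hA.nontrivial a
  obtain ⟨q, -, hq, -⟩ := hA.nontrivial r
  have hra : I r ⊆ lowerBounds (I a) := hrw'.trans (lowerBounds_mono_set (hA.subset_of_le hwa.le))
  exact hxy ((le_antisymm (har hx hq) (hra hq hx)).trans (le_antisymm (har hy hq) (hra hq hy)).symm)

theorem exists_cofinal_lt_not_le_right_or_rightmost {α : Ordinal} (hα : Order.IsSuccLimit α)
    {f : Ordinal → Ordinal} (hf : IsCofinalSeq α f) {H : Set T}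
    (hH : H ⊆ treeLevel hA.tree α) {a : T} (ha : a ∈ H) :
    ∃ z r : T, z < a ∧ (∃ ξ < α.cof.ord, treeHt hA.tree z = f ξ) ∧
      ((r ∈ H ∧ ¬ z ≤ r ∧ I a ⊆ lowerBounds (I r)) ∨
        ∀ a' ∈ H, a' ≠ a → I a' ⊆ lowerBounds (I a)) := by
  have hincomp : ∀ b ∈ H, ∀ c ∈ H, b ≠ c → ¬ b ≤ c := fun b hb c hc hbc =>
    hA.tree.not_le_of_treeHt_eq hbc ((hH hb).trans (hH hc).symm)
  by_cases hright : ∃ r ∈ H, r ≠ a ∧ I a ⊆ lowerBounds (I r)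
  · obtain ⟨r, hr, hra, har⟩ := hright
    have hnle : ¬ ∀ z < a, (∃ ξ < α.cof.ord, treeHt hA.tree z = f ξ) → z ≤ r := fun h =>
      hincomp a ha r hr hra.symm <| hA.le_of_forall_lt_le ((hH ha).symm ▸ hα.isSuccPrelimit)
        fun z hz => by
          obtain ⟨p, hpa, hp, hzp⟩ := hA.tree.exists_cofinal_pred_ge hf (hH ha) hz
          exact hzp.trans (h p hpa hp)
    push Not at hnle
    obtain ⟨z, hza, hzξ, hzr⟩ := hnle
    exact ⟨z, r, hza, hzξ, .inl ⟨hr, hzr, har⟩⟩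
  · obtain ⟨z, hza, hzξ⟩ := hA.tree.exists_cofinal_pred hα hf (hH ha)
    refine ⟨z, a, hza, hzξ, .inr fun a' ha' ha'a => ?_⟩
    refine (hA.separated_of_not_le (hincomp a' ha' a ha ha'a)
      (hincomp a ha a' ha' (Ne.symm ha'a))).resolve_right fun h => hright ?_
    exact ⟨a', ha', ha'a, h⟩

end IsAdmissiblePartitionTree

theorem stmt_16_general {K : Type} [LinearOrder K] [TopologicalSpace K]
    {T : Type} [PartialOrder T] {I : T → Set K}
    (hT : IsAdmissiblePartitionTree K T I)
    (α : Ordinal) (hα : Order.IsSuccLimit α)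
    (f : Ordinal → Ordinal) (hf : IsCofinalSeq α f)
    (H : Set T) (hH : H ⊆ treeLevel hT.tree α) :
    ∃ π : T → T,
      (∀ a ∈ H, π a < a ∧ ∃ ξ : Ordinal, ξ < α.cof.ord ∧ treeHt hT.tree (π a) = f ξ) ∧
      ∀ w : T, ({a ∈ H | π a = w}).Nonempty →
        ∃ b ∈ H, ∀ a ∈ H, π a = w →
          ∀ x y : K, IsLeast (I a) x → IsLeast (I b) y → x ≤ y := by
  choose! π ρ hπa hπξ hρ using
    fun a (ha : a ∈ H) => hT.exists_cofinal_lt_not_le_right_or_rightmost hα hf hH ha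
  refine ⟨π, fun a ha => ⟨hπa a ha, hπξ a ha⟩, ?_⟩
  rintro w ⟨a₀, ha₀, rfl⟩
  by_cases hc : ∃ a ∈ H, π a = π a₀ ∧ ρ a ∈ H ∧ ¬ π a ≤ ρ a ∧ I a ⊆ lowerBounds (I (ρ a))
  · obtain ⟨a, ha, hw, hr, hnle, har⟩ := hc
    have hrw : ¬ ρ a ≤ π a := fun h => (hT.tree.treeHt_mono h).not_gt <| by
      rw [hH hr, ← hH ha]; exact hT.tree.treeHt_lt_treeHt (hπa a ha)
    have hwr := hT.subset_lowerBounds_of_lt (hπa a ha) hnle hrw har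
    refine ⟨ρ a, hr, fun a' ha' hw' x y hx hy => hwr ?_ hy.1⟩
    exact hw ▸ hw' ▸ hT.subset_of_le (hπa a' ha').le hx.1
  · refine ⟨a₀, ha₀, fun a' ha' _ x y hx hy => ?_⟩
    have hrightmost := (hρ a₀ ha₀).resolve_left fun h => hc ⟨a₀, ha₀, rfl, h⟩
    rcases eq_or_ne a' a₀ with rfl | hne
    exacts [hx.2 hy.1, hrightmost a' ha' hne hx.1 hy.1]

/-- Given `H ⊆ T_α` (`α` limit) in an admissible partition tree, there is a regressive map
`π : H → ⋃_{ξ<κ} T_{α_ξ}` such that each nonempty fibre `π⁻¹(w)` has its set of left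
endpoints bounded above by the left endpoint of some member of `H`. -/
theorem stmt_16 {K : Type} [LinearOrder K] [TopologicalSpace K] [OrderTopology K]
    [CompactSpace K] [Nontrivial K]
    {T : Type} [PartialOrder T] {I : T → Set K}
    (hT : IsAdmissiblePartitionTree K T I)
    (α : Ordinal) (hα : Order.IsSuccLimit α)
    (f : Ordinal → Ordinal) (hf : IsCofinalSeq α f)
    (H : Set T) (hH : H ⊆ treeLevel hT.tree α) :
    ∃ π : T → T,
      (∀ a ∈ H, π a < a ∧ ∃ ξ : Ordinal, ξ < α.cof.ord ∧ treeHt hT.tree (π a) = f ξ) ∧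
      ∀ w : T, ({a ∈ H | π a = w}).Nonempty →
        ∃ b ∈ H, ∀ a ∈ H, π a = w →
          ∀ x y : K, IsLeast (I a) x → IsLeast (I b) y → x ≤ y :=
  stmt_16_general hT α hα f hf H hH
end
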